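/- Let w ≥ 2 be a word size, let r1, r2, r3 ≤ w−1 be fixed, and let 1 ≤ r ≤ w−1 be a rotation amount. For any two choices r4, r4' ≤ w−1 of the fourth rotation constant, denote by Q and Q' the ChaCha quarter rounds with rotation constants (r1,r2,r3,r4) and (r1,r2,r3,r4') respectively. Then for every input (x0,x1,x2,x3), the rotational pair propagates through Q (i.e. Q(x0 ⋘ r, …, x3 ⋘ r) equals the componentwise rotation by r of Q(x0,…,x3)) if and only if it propagates through Q'. In particular, the number of inputs on which a rotational pair propagates through the quarter round does not depend on r4. -/

import Mathlib

instance bitvecFintype {w : ℕ} : Fintype (BitVec w) :=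
  Fintype.ofEquiv (Fin (2 ^ w)) ⟨BitVec.ofFin, BitVec.toFin, fun _ => rfl, fun _ => rfl⟩

/-- The ChaCha quarter round with rotation constants `r1, r2, r3, r4`,
acting on quadruples of `w`-bit words. -/
def chachaQR {w : ℕ} (r1 r2 r3 r4 : ℕ)
    (x : BitVec w × BitVec w × BitVec w × BitVec w) :
    BitVec w × BitVec w × BitVec w × BitVec w :=
  let b0 := x.1 + x.2.1
  let b3 := (b0 ^^^ x.2.2.2).rotateLeft r1
  let b2 := b3 + x.2.2.1
  let b1 := (b2 ^^^ x.2.1).rotateLeft r2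
  let y0 := b0 + b1
  let y3 := (y0 ^^^ b3).rotateLeft r3
  let y2 := y3 + b2
  let y1 := (y2 ^^^ b1).rotateLeft r4
  (y0, y1, y2, y3)

/-- Componentwise left rotation by `r` of a quadruple of `w`-bit words. -/
def rot4 {w : ℕ} (r : ℕ) (x : BitVec w × BitVec w × BitVec w × BitVec w) :
    BitVec w × BitVec w × BitVec w × BitVec w :=
  (x.1.rotateLeft r, x.2.1.rotateLeft r, x.2.2.1.rotateLeft r, x.2.2.2.rotateLeft r)

/-!
In the quarter round, `r4` only enters through the final rotation of the second output word, so
`chachaQR r1 r2 r3 r4` is `chachaQR r1 r2 r3 0` followed by that rotation. Rotations of words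
commute with each other and are injective, hence the final rotation can be moved past `rot4 r` and
cancelled: a rotational pair propagates through the quarter round with `r4` exactly when it
propagates through the one with `r4 = 0`.
-/

namespace BitVec

open Fin.NatCast

variable {w : ℕ}

-- With bit positions in the group `Fin w`, rotation by `n` is translation by `n`.
theorem getLsbD_rotateLeft_fin_add [NeZero w] (x : BitVec w) (n : ℕ) (j : Fin w) :
    (x.rotateLeft n).getLsbD ↑(j + (n : Fin w)) = x.getLsbD j := by
  have hj := j.isLt
  have hn := Nat.mod_lt n (NeZero.pos w)
  have hidx : ((j + (n : Fin w) : Fin w) : ℕ) = ((j : ℕ) + n % w) % w := by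
    rw [Fin.val_add, Fin.val_natCast]
  rw [← rotateLeft_mod_eq_rotateLeft, getLsbD_rotateLeft_of_le hn, hidx]
  rcases Nat.lt_or_ge ((j : ℕ) + n % w) w with h | h
  · rw [Nat.mod_eq_of_lt h]
    simp [h]
  · rw [Nat.mod_eq_sub_mod h, Nat.mod_eq_of_lt (by omega)]
    simp [show (j : ℕ) + n % w - w < n % w by omega,
      show w - n % w + ((j : ℕ) + n % w - w) = j by omega]

theorem rotateLeft_rotateLeft (x : BitVec w) (m n : ℕ) :
    (x.rotateLeft m).rotateLeft n = x.rotateLeft (m + n) := by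
  rcases Nat.eq_zero_or_pos w with rfl | hw
  · exact Subsingleton.elim _ _
  have : NeZero w := ⟨hw.ne'⟩
  refine eq_of_getLsbD_eq fun i hi => ?_
  obtain ⟨j, rfl⟩ : ∃ j : Fin w, ((j + ((m + n : ℕ) : Fin w) : Fin w) : ℕ) = i :=
    ⟨⟨i, hi⟩ - ((m + n : ℕ) : Fin w), by simp⟩
  rw [getLsbD_rotateLeft_fin_add, Nat.cast_add, ← add_assoc, getLsbD_rotateLeft_fin_add,
    getLsbD_rotateLeft_fin_add]

theorem rotateLeft_comm (x : BitVec w) (m n : ℕ) :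
    (x.rotateLeft m).rotateLeft n = (x.rotateLeft n).rotateLeft m := by
  rw [rotateLeft_rotateLeft, rotateLeft_rotateLeft, Nat.add_comm]

theorem rotateLeft_injective (n : ℕ) : Function.Injective fun x : BitVec w => x.rotateLeft n := by
  intro x y h
  rcases Nat.eq_zero_or_pos w with rfl | hw
  · exact Subsingleton.elim _ _
  have : NeZero w := ⟨hw.ne'⟩
  refine eq_of_getLsbD_eq fun i hi => ?_
  have := congrArg (fun z : BitVec w => z.getLsbD ↑((⟨i, hi⟩ : Fin w) + (n : Fin w))) h
  simpa only [getLsbD_rotateLeft_fin_add] using this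

end BitVec

section ChaCha

variable {w : ℕ}

def rotateLeftSnd (n : ℕ) (y : BitVec w × BitVec w × BitVec w × BitVec w) :
    BitVec w × BitVec w × BitVec w × BitVec w :=
  (y.1, y.2.1.rotateLeft n, y.2.2)

theorem rotateLeftSnd_injective (n : ℕ) :
    Function.Injective (rotateLeftSnd (w := w) n) := by
  rintro ⟨a, b, c⟩ ⟨a', b', c'⟩ h
  simp only [rotateLeftSnd, Prod.mk.injEq] at h
  obtain ⟨rfl, hb, rfl⟩ := h
  rw [BitVec.rotateLeft_injective n hb]

theorem rot4_rotateLeftSnd (r n : ℕ) (y : BitVec w × BitVec w × BitVec w × BitVec w) :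
    rot4 r (rotateLeftSnd n y) = rotateLeftSnd n (rot4 r y) := by
  simp only [rot4, rotateLeftSnd, BitVec.rotateLeft_comm]

theorem chachaQR_eq_rotateLeftSnd_chachaQR_zero (r1 r2 r3 r4 : ℕ)
    (x : BitVec w × BitVec w × BitVec w × BitVec w) :
    chachaQR r1 r2 r3 r4 x = rotateLeftSnd r4 (chachaQR r1 r2 r3 0 x) := by
  simp only [chachaQR, rotateLeftSnd, BitVec.rotateLeft_rotateLeft, Nat.zero_add]

theorem chachaQR_rot4_eq_iff (r1 r2 r3 r4 r : ℕ) (x : BitVec w × BitVec w × BitVec w × BitVec w) :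
    chachaQR r1 r2 r3 r4 (rot4 r x) = rot4 r (chachaQR r1 r2 r3 r4 x) ↔
      chachaQR r1 r2 r3 0 (rot4 r x) = rot4 r (chachaQR r1 r2 r3 0 x) := by
  simp only [chachaQR_eq_rotateLeftSnd_chachaQR_zero (r4 := r4), rot4_rotateLeftSnd,
    (rotateLeftSnd_injective r4).eq_iff]

end ChaCha

theorem chachaQR_rotational_independent_of_r4_general
    (w : ℕ)
    (r1 r2 r3 r4 r4' : ℕ)
    (r : ℕ) :
    (∀ x : BitVec w × BitVec w × BitVec w × BitVec w,
      chachaQR r1 r2 r3 r4 (rot4 r x) = rot4 r (chachaQR r1 r2 r3 r4 x) ↔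
      chachaQR r1 r2 r3 r4' (rot4 r x) = rot4 r (chachaQR r1 r2 r3 r4' x)) ∧
    (Finset.univ.filter (fun x : BitVec w × BitVec w × BitVec w × BitVec w =>
        chachaQR r1 r2 r3 r4 (rot4 r x) = rot4 r (chachaQR r1 r2 r3 r4 x))).card =
    (Finset.univ.filter (fun x : BitVec w × BitVec w × BitVec w × BitVec w =>
        chachaQR r1 r2 r3 r4' (rot4 r x) = rot4 r (chachaQR r1 r2 r3 r4' x))).card := by
  have propagates_iff (x : BitVec w × BitVec w × BitVec w × BitVec w) :
      chachaQR r1 r2 r3 r4 (rot4 r x) = rot4 r (chachaQR r1 r2 r3 r4 x) ↔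
        chachaQR r1 r2 r3 r4' (rot4 r x) = rot4 r (chachaQR r1 r2 r3 r4' x) := by
    rw [chachaQR_rot4_eq_iff, chachaQR_rot4_eq_iff (r4 := r4')]
  exact ⟨propagates_iff, congrArg Finset.card (Finset.filter_congr fun x _ => propagates_iff x)⟩

theorem chachaQR_rotational_independent_of_r4
    (w : ℕ) (hw : 2 ≤ w)
    (r1 r2 r3 r4 r4' : ℕ)
    (hr1 : r1 ≤ w - 1) (hr2 : r2 ≤ w - 1) (hr3 : r3 ≤ w - 1)
    (hr4 : r4 ≤ w - 1) (hr4' : r4' ≤ w - 1)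
    (r : ℕ) (hr : 1 ≤ r) (hrw : r ≤ w - 1) :
    (∀ x : BitVec w × BitVec w × BitVec w × BitVec w,
      chachaQR r1 r2 r3 r4 (rot4 r x) = rot4 r (chachaQR r1 r2 r3 r4 x) ↔
      chachaQR r1 r2 r3 r4' (rot4 r x) = rot4 r (chachaQR r1 r2 r3 r4' x)) ∧
    (Finset.univ.filter (fun x : BitVec w × BitVec w × BitVec w × BitVec w =>
        chachaQR r1 r2 r3 r4 (rot4 r x) = rot4 r (chachaQR r1 r2 r3 r4 x))).card =
    (Finset.univ.filter (fun x : BitVec w × BitVec w × BitVec w × BitVec w =>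
        chachaQR r1 r2 r3 r4' (rot4 r x) = rot4 r (chachaQR r1 r2 r3 r4' x))).card :=
  chachaQR_rotational_independent_of_r4_general w r1 r2 r3 r4 r4' r
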